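/- A boundary vertex x of degree at least 3 with nonnegative curvature in a semiplanar graph with boundary has pattern among (3,3), (3,4), (3,5), (3,6), (4,4), (3,3,3), with corresponding curvatures 1/6, 1/12, 1/30, 0, 0, 0. -/

import Mathlib

/-!
Every face has degree at least 3, so `Φ ≤ 1 - n/2 + (n-1)/3 = (4-n)/6` and nonnegative curvature
forces `n ∈ {3, 4}`. For `n = 4` this bound is attained, so all three faces are triangles. For
`n = 3` the condition `1/a + 1/b ≥ 1/2` with `3 ≤ a ≤ b` reads `ab ≤ 2(a+b)`, which gives `a ≤ 4`
and then `b ≤ 6` (for `a = 3`) or `b ≤ 4` (for `a = 4`).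
-/

def boundaryCurvature (n : ℕ) (l : List ℕ) : ℚ :=
  1 - (n : ℚ) / 2 + (l.map fun d : ℕ => (1 : ℚ) / d).sum

namespace List

lemma sum_map_one_div_le {l : List ℕ} {k : ℕ} (hk : 0 < k) (hd : ∀ d ∈ l, k ≤ d) :
    (l.map fun d : ℕ => (1 : ℚ) / d).sum ≤ l.length / k := by
  have := sum_le_card_nsmul (l.map fun d : ℕ => (1 : ℚ) / d) (1 / k) <|
    forall_mem_map.mpr fun d hdl =>
      one_div_le_one_div_of_le (by exact_mod_cast hk) (by exact_mod_cast hd d hdl)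
  simpa [div_eq_mul_one_div (l.length : ℚ)] using this

lemma forall_eq_of_length_div_le_sum_map_one_div {l : List ℕ} {k : ℕ} (hk : 0 < k)
    (hd : ∀ d ∈ l, k ≤ d) (h : (l.length : ℚ) / k ≤ (l.map fun d : ℕ => (1 : ℚ) / d).sum) :
    ∀ d ∈ l, d = k := by
  by_contra! ⟨d, hdl, hdk⟩
  have hlt : (l.map fun d : ℕ => (1 : ℚ) / d).sum < (l.map fun _ => (1 : ℚ) / k).sum :=
    sum_lt_sum _ _
      (fun e he => one_div_le_one_div_of_le (by exact_mod_cast hk) (by exact_mod_cast hd e he))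
      ⟨d, hdl, one_div_lt_one_div_of_lt (by exact_mod_cast hk)
        (by exact_mod_cast lt_of_le_of_ne (hd d hdl) hdk.symm)⟩
  rw [map_const', sum_replicate, nsmul_eq_mul, ← div_eq_mul_one_div] at hlt
  linarith

end List

lemma boundaryCurvature_le {n : ℕ} {l : List ℕ} (hn : 1 ≤ n) (hlen : l.length = n - 1)
    (hd : ∀ d ∈ l, 3 ≤ d) : boundaryCurvature n l ≤ (4 - n) / 6 := by
  have hsum := List.sum_map_one_div_le (by norm_num) hd
  rw [hlen, Nat.cast_sub hn, Nat.cast_one] at hsum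
  unfold boundaryCurvature
  linarith

lemma eq_of_half_le_one_div_add_one_div {a b : ℕ} (ha : 3 ≤ a) (hab : a ≤ b)
    (h : (1 : ℚ) / 2 ≤ 1 / a + 1 / b) :
    (a = 3 ∧ b = 3) ∨ (a = 3 ∧ b = 4) ∨ (a = 3 ∧ b = 5) ∨ (a = 3 ∧ b = 6) ∨ (a = 4 ∧ b = 4) := by
  have hmul : a * b ≤ 2 * (a + b) := by
    have ha0 : (0 : ℚ) < a := by positivity
    have hb0 : (0 : ℚ) < b := by exact_mod_cast (by omega : 0 < b)
    rw [div_add_div _ _ ha0.ne' hb0.ne', div_le_div_iff₀ two_pos (by positivity)] at h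
    exact_mod_cast (by linarith : (a : ℚ) * b ≤ 2 * (a + b))
  have ha4 : a ≤ 4 := by nlinarith
  interval_cases a
  · have : b ≤ 6 := by omega
    interval_cases b <;> simp
  · have : b ≤ 4 := by omega
    interval_cases b
    simp

/-- A boundary vertex of degree n ≥ 3 (incident to n-1 faces, degrees listed
in nondecreasing order) with nonnegative curvature has pattern among
(3,3), (3,4), (3,5), (3,6), (4,4), (3,3,3), with curvatures
1/6, 1/12, 1/30, 0, 0, 0 respectively. -/
theorem stmt_14 (n : ℕ) (hn : 3 ≤ n) (l : List ℕ) (hlen : l.length = n - 1)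
    (hsort : l.Pairwise (· ≤ ·)) (hd : ∀ d ∈ l, 3 ≤ d)
    (Φ : ℚ) (hΦ : Φ = 1 - (n:ℚ)/2 + (l.map fun d => (1:ℚ)/(d:ℚ)).sum)
    (hnn : 0 ≤ Φ) :
    (l = [3,3] ∧ Φ = 1/6) ∨ (l = [3,4] ∧ Φ = 1/12) ∨
    (l = [3,5] ∧ Φ = 1/30) ∨ (l = [3,6] ∧ Φ = 0) ∨
    (l = [4,4] ∧ Φ = 0) ∨ (l = [3,3,3] ∧ Φ = 0) := by
  -- `(d : ℚ)` makes Lean coerce `l` itself to `List ℚ`, which elaborates as `l >>= pure ∘ (↑)`.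
  replace hΦ : Φ = boundaryCurvature n l := by
    rw [hΦ, boundaryCurvature, List.bind_eq_flatMap]
    simp only [List.pure_def, ← List.map_eq_flatMap, List.map_map]
    rfl
  have hle := boundaryCurvature_le (by omega) hlen hd
  obtain rfl | rfl : n = 3 ∨ n = 4 := by
    have : (n : ℚ) ≤ 4 := by linarith
    have : n ≤ 4 := by exact_mod_cast this
    omega
  · obtain ⟨a, b, rfl⟩ := List.length_eq_two.mp hlen
    have h : (1 : ℚ) / 2 ≤ 1 / a + 1 / b := by
      norm_num [hΦ, boundaryCurvature, one_div] at hnn ⊢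
      linarith
    rcases eq_of_half_le_one_div_add_one_div (hd a (by simp)) (by simpa using hsort) h with
      ⟨rfl, rfl⟩ | ⟨rfl, rfl⟩ | ⟨rfl, rfl⟩ | ⟨rfl, rfl⟩ | ⟨rfl, rfl⟩ <;>
    norm_num [hΦ, boundaryCurvature]
  · have hl : l = [3, 3, 3] := by
      refine List.eq_replicate_iff.mpr
        ⟨hlen, List.forall_eq_of_length_div_le_sum_map_one_div (by norm_num) hd ?_⟩
      norm_num [hlen, hΦ, boundaryCurvature] at hnn ⊢
      linarith
    subst hl
    norm_num [hΦ, boundaryCurvature]
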